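/- arXiv:2007.09634 — 5 statements merged into one kernel-verified Lean document; each statement's English description precedes it below -/
import Mathlib

section
/- Let d ≥ 1, let P be a finite nonempty subset of ℝ^d satisfying Condition 1, and let ε ∈ (0,1). Let X = {p ∈ P : R(p) ≠ ∅} be the set of extreme points of P. Suppose Q ⊆ P is such that for every t ∈ X, either t ∈ Q, or there exists t' ∈ Q with R(t) ⊆ R_ε(t'). Then Q is an ε-regret set of P, i.e., ω(x,Q) ≥ (1−ε)·ω(x,P) for every unit vector x ∈ ℝ^d. -/
open scoped RealInnerProductSpace

/-- correctness of H-GRMR: Let `P` satisfy Condition 1, `ε ∈ (0,1)`,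
and let `X` be the set of extreme points of `P` (those with nonempty Voronoi cell).
If `Q ⊆ P` is such that every `t ∈ X` is either in `Q` or has its Voronoi cell
`R(t)` covered by the `ε`-approximate Voronoi cell `R_ε(t')` of some `t' ∈ Q`,
then `Q` is an `ε`-regret set of `P`: for every unit `x`,
`ω(x,Q) ≥ (1−ε)·ω(x,P)` (i.e. some `q ∈ Q` has `⟪q,x⟫ ≥ (1−ε)·ω(x,P)`). -/
theorem stmt8 (d : ℕ) (hd : 1 ≤ d)
    (P : Finset (EuclideanSpace ℝ (Fin d))) (hP : P.Nonempty)
    (cond1 : ∀ x : EuclideanSpace ℝ (Fin d), ‖x‖ = 1 →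
      0 < P.sup' hP (fun t => ⟪t, x⟫))
    (ε : ℝ) (hε : ε ∈ Set.Ioo (0 : ℝ) 1)
    (R : EuclideanSpace ℝ (Fin d) → Set (EuclideanSpace ℝ (Fin d)))
    (hR : ∀ p, R p = {x : EuclideanSpace ℝ (Fin d) |
      x ≠ 0 ∧ P.sup' hP (fun t => ⟪t, x⟫) ≤ ⟪p, x⟫})
    (Rε : EuclideanSpace ℝ (Fin d) → Set (EuclideanSpace ℝ (Fin d)))
    (hRε : ∀ p, Rε p = {x : EuclideanSpace ℝ (Fin d) |
      x ≠ 0 ∧ (1 - ε) * P.sup' hP (fun t => ⟪t, x⟫) ≤ ⟪p, x⟫})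
    (Q : Finset (EuclideanSpace ℝ (Fin d))) (hQP : Q ⊆ P)
    (hdom : ∀ t ∈ P, (R t).Nonempty →
      t ∈ Q ∨ ∃ t' ∈ Q, R t ⊆ Rε t') :
    ∀ x : EuclideanSpace ℝ (Fin d), ‖x‖ = 1 →
      ∃ q ∈ Q, (1 - ε) * P.sup' hP (fun t => ⟪t, x⟫) ≤ ⟪q, x⟫ := by
  intro x hx
  have hx0 : x ≠ 0 := by
    intro h; rw [h, norm_zero] at hx; norm_num at hx
  obtain ⟨p, hpP, hpx⟩ := Finset.exists_mem_eq_sup' hP (fun t => ⟪t, x⟫)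
  have hxR : x ∈ R p := by
    rw [hR]; exact ⟨hx0, le_of_eq hpx⟩
  rcases hdom p hpP ⟨x, hxR⟩ with hpQ | ⟨t', ht'Q, hsub⟩
  · refine ⟨p, hpQ, ?_⟩
    rw [← hpx]
    nlinarith [cond1 x hx, hε.1]
  · have := hsub hxR
    rw [hRε] at this
    exact ⟨t', ht'Q, this.2⟩
end

section
/- Let d ≥ 1, let P be a finite nonempty subset of ℝ^d satisfying Condition 1, let ε ∈ (0,1), and let Q ⊆ P be an ε-regret set of P. Then |Q| ≥ d + 1. Equivalently, any subset of P of size at most d has maximum regret ratio at least 1 over P. -/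
open scoped RealInnerProductSpace
open Module Finset

/-! At most `d` points of `ℝ^d` lie in an affine hyperplane, so some unit vector `u` has the same
inner product with every point of `Q`; after flipping its sign, all these inner products are
`≤ 0`. In direction `u` the set `Q` then attains at most `0`, whereas Condition 1 makes
`(1 - ε) ω(u, P)` positive. -/

theorem vectorSpan_ne_top_of_card_le_finrank {k V : Type*} [DivisionRing k] [AddCommGroup V]
    [Module k V] [FiniteDimensional k V] (hV : 0 < finrank k V) {Q : Finset V}
    (hQ : #Q ≤ finrank k V) : vectorSpan k (Q : Set V) ≠ ⊤ := by
  classical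
  have hlt : finrank k (vectorSpan k (Q : Set V)) < finrank k V := by
    rcases Q.eq_empty_or_nonempty with rfl | hne
    · rwa [coe_empty, vectorSpan_empty, finrank_bot]
    · have := finrank_vectorSpan_image_finset_le k id Q (Nat.sub_add_cancel hne.card_pos).symm
      rw [image_id] at this
      omega
  intro htop
  rw [htop, finrank_top] at hlt
  exact hlt.false

section InnerProductSpace

variable {E : Type*} [NormedAddCommGroup E] [InnerProductSpace ℝ E] [FiniteDimensional ℝ E]

theorem exists_norm_eq_one_inner_eq_of_vectorSpan_ne_top {Q : Finset E}
    (hQ : vectorSpan ℝ (Q : Set E) ≠ ⊤) :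
    ∃ u : E, ‖u‖ = 1 ∧ ∀ p ∈ Q, ∀ q ∈ Q, ⟪p, u⟫ = ⟪q, u⟫ := by
  obtain ⟨u, hu, hu0⟩ := Submodule.exists_mem_ne_zero_of_ne_bot
    (mt Submodule.orthogonal_eq_bot_iff.mp hQ)
  refine ⟨‖u‖⁻¹ • u, norm_smul_inv_norm hu0, fun p hp q hq => ?_⟩
  have hpq : ⟪p - q, u⟫ = 0 :=
    Submodule.inner_right_of_mem_orthogonal (vsub_mem_vectorSpan ℝ hp hq) hu
  rw [inner_sub_left, sub_eq_zero] at hpq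
  simp only [real_inner_smul_right, hpq]

theorem exists_norm_eq_one_forall_inner_nonpos_of_card_le_finrank (hE : 0 < finrank ℝ E)
    {Q : Finset E} (hQ : #Q ≤ finrank ℝ E) :
    ∃ u : E, ‖u‖ = 1 ∧ ∀ q ∈ Q, ⟪q, u⟫ ≤ 0 := by
  obtain ⟨u, hu, hconst⟩ := exists_norm_eq_one_inner_eq_of_vectorSpan_ne_top
    (vectorSpan_ne_top_of_card_le_finrank hE hQ)
  rcases Q.eq_empty_or_nonempty with rfl | ⟨q₀, hq₀⟩
  · exact ⟨u, hu, by simp⟩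
  rcases le_total ⟪q₀, u⟫ 0 with hneg | hpos
  · exact ⟨u, hu, fun q hq => hconst q hq q₀ hq₀ ▸ hneg⟩
  · refine ⟨-u, by rw [norm_neg, hu], fun q hq => ?_⟩
    rw [inner_neg_right, hconst q hq q₀ hq₀]
    exact neg_nonpos.mpr hpos

end InnerProductSpace

theorem stmt11_general (d : ℕ) (hd : 1 ≤ d)
    (P : Finset (EuclideanSpace ℝ (Fin d))) (hP : P.Nonempty)
    (cond1 : ∀ x : EuclideanSpace ℝ (Fin d), ‖x‖ = 1 →
      0 < P.sup' hP (fun t => ⟪t, x⟫))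
    (ε : ℝ) (hε : ε ∈ Set.Ioo (0 : ℝ) 1)
    (Q : Finset (EuclideanSpace ℝ (Fin d)))
    (hreg : ∀ x : EuclideanSpace ℝ (Fin d), ‖x‖ = 1 →
      ∃ q ∈ Q, (1 - ε) * P.sup' hP (fun t => ⟪t, x⟫) ≤ ⟪q, x⟫) :
    d + 1 ≤ Q.card := by
  by_contra! hQ
  have hdim : finrank ℝ (EuclideanSpace ℝ (Fin d)) = d := finrank_euclideanSpace_fin
  obtain ⟨u, hu, hnonpos⟩ :=
    exists_norm_eq_one_forall_inner_nonpos_of_card_le_finrank (by omega) (by omega : #Q ≤ _)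
  obtain ⟨q, hq, hregq⟩ := hreg u hu
  have hpos : 0 < (1 - ε) * P.sup' hP (fun t => ⟪t, u⟫) :=
    mul_pos (sub_pos.mpr hε.2) (cond1 u hu)
  linarith [hnonpos q hq]

/-- If `P` satisfies Condition 1, `ε ∈ (0,1)`, and `Q ⊆ P` is an
`ε`-regret set of `P` (for every unit `x` some `q ∈ Q` has
`⟪q,x⟫ ≥ (1−ε)·ω(x,P)`), then `|Q| ≥ d + 1`. -/
theorem stmt11 (d : ℕ) (hd : 1 ≤ d)
    (P : Finset (EuclideanSpace ℝ (Fin d))) (hP : P.Nonempty)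
    (cond1 : ∀ x : EuclideanSpace ℝ (Fin d), ‖x‖ = 1 →
      0 < P.sup' hP (fun t => ⟪t, x⟫))
    (ε : ℝ) (hε : ε ∈ Set.Ioo (0 : ℝ) 1)
    (Q : Finset (EuclideanSpace ℝ (Fin d))) (hQP : Q ⊆ P)
    (hreg : ∀ x : EuclideanSpace ℝ (Fin d), ‖x‖ = 1 →
      ∃ q ∈ Q, (1 - ε) * P.sup' hP (fun t => ⟪t, x⟫) ≤ ⟪q, x⟫) :
    d + 1 ≤ Q.card :=
  stmt11_general d hd P hP cond1 ε hε Q hreg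
end

section
/- Fix η > 3 and define b₁ = (1−η, 1, 1), b₂ = (1, 1−η, 1), b₃ = (1, 1, 1−η) in ℝ³. Then for every unit vector x ∈ ℝ³ having at least one strictly negative coordinate: (i) max_{i ∈ {1,2,3}} ⟨b_i,x⟩ > 0, and (ii) max_{i ∈ {1,2,3}} ⟨b_i,x⟩ ≥ ⟨p,x⟩ for every p ∈ [0,1]³. In other words, outside the nonnegative orthant of utility vectors, the point with the highest score among [0,1]³ ∪ {b₁,b₂,b₃} is always one of b₁, b₂, b₃, and its score is positive. -/
/-!
Let `m < 0` be the smallest coordinate of `x`, attained at `j`, and let `bⱼ = 𝟙 - η eⱼ`, so that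
`⟪bⱼ, x⟫ = ∑ xᵢ - η m`. Every `p ∈ [0,1]ⁿ` has `pᵢ xᵢ ≤ xᵢ - m`, hence
`⟪p, x⟫ ≤ ∑ xᵢ - n m ≤ ∑ xᵢ - η m` once `η ≥ n`; and `∑ xᵢ - η m ≥ (n - η) m`, which is positive
once `η > n`.
-/

open scoped RealInnerProductSpace

open Finset

lemma mul_le_sub_of_mem_Icc {p a m : ℝ} (hp : p ∈ Set.Icc (0 : ℝ) 1) (hm : m ≤ 0)
    (ha : m ≤ a) : p * a ≤ a - m := by
  obtain ⟨hp0, hp1⟩ := hp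
  rcases le_total 0 a with h | h <;> nlinarith

section

variable {ι : Type*} [Fintype ι]

lemma inner_le_sum_sub_card_mul {p x : EuclideanSpace ℝ ι} (hp : ∀ i, p i ∈ Set.Icc (0 : ℝ) 1)
    {m : ℝ} (hm : m ≤ 0) (hmx : ∀ i, m ≤ x i) :
    ⟪p, x⟫ ≤ ∑ i, x i - Fintype.card ι * m := by
  calc ⟪p, x⟫ = ∑ i, p i * x i := by simp [PiLp.inner_apply, mul_comm]
    _ ≤ ∑ i, (x i - m) := sum_le_sum fun i _ => mul_le_sub_of_mem_Icc (hp i) hm (hmx i)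
    _ = ∑ i, x i - Fintype.card ι * m := by simp [sum_sub_distrib]

variable [DecidableEq ι]

noncomputable def dominatingPoint (η : ℝ) (j : ι) : EuclideanSpace ℝ ι :=
  WithLp.toLp 2 fun i => 1 - if i = j then η else 0

lemma inner_dominatingPoint (η : ℝ) (j : ι) (x : EuclideanSpace ℝ ι) :
    ⟪dominatingPoint η j, x⟫ = ∑ i, x i - η * x j := by
  simp [dominatingPoint, PiLp.inner_apply, sub_mul, ite_mul, sum_sub_distrib, mul_comm]

theorem exists_dominatingPoint {η : ℝ} (hη : Fintype.card ι < η) {x : EuclideanSpace ℝ ι}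
    (hneg : ∃ i, x i < 0) :
    ∃ j, 0 < ⟪dominatingPoint η j, x⟫ ∧
      ∀ p : EuclideanSpace ℝ ι, (∀ i, p i ∈ Set.Icc (0 : ℝ) 1) → ⟪p, x⟫ ≤ ⟪dominatingPoint η j, x⟫ := by
  obtain ⟨i₀, hi₀⟩ := hneg
  have : Nonempty ι := ⟨i₀⟩
  obtain ⟨j, hj⟩ := Finite.exists_min fun i => x i
  have hxj : x j < 0 := (hj i₀).trans_lt hi₀
  refine ⟨j, ?_, fun p hp => ?_⟩
  · have hsum : Fintype.card ι * x j ≤ ∑ i, x i := by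
      simpa using card_nsmul_le_sum univ (fun i => x i) (x j) fun i _ => hj i
    rw [inner_dominatingPoint]
    nlinarith
  · calc ⟪p, x⟫ ≤ ∑ i, x i - Fintype.card ι * x j := inner_le_sum_sub_card_mul hp hxj.le hj
      _ ≤ ⟪dominatingPoint η j, x⟫ := by rw [inner_dominatingPoint]; nlinarith

end

/-- For `η > 3`, `b₁ = (1−η,1,1)`, `b₂ = (1,1−η,1)`, `b₃ = (1,1,1−η)`,
every unit vector `x ∈ ℝ³` with a strictly negative coordinate satisfies
(i) `max_i ⟪b_i,x⟫ > 0` and (ii) `max_i ⟪b_i,x⟫ ≥ ⟪p,x⟫` for every `p ∈ [0,1]³`. -/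
theorem stmt13 (η : ℝ) (hη : 3 < η)
    (b₁ b₂ b₃ : EuclideanSpace ℝ (Fin 3))
    (hb₁ : b₁ = ![1 - η, 1, 1]) (hb₂ : b₂ = ![1, 1 - η, 1])
    (hb₃ : b₃ = ![1, 1, 1 - η]) :
    ∀ x : EuclideanSpace ℝ (Fin 3), ‖x‖ = 1 → (∃ i, x i < 0) →
      0 < max (max ⟪b₁, x⟫ ⟪b₂, x⟫) ⟪b₃, x⟫ ∧
      ∀ p : EuclideanSpace ℝ (Fin 3), (∀ i, p i ∈ Set.Icc (0 : ℝ) 1) →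
        ⟪p, x⟫ ≤ max (max ⟪b₁, x⟫ ⟪b₂, x⟫) ⟪b₃, x⟫ := by
  intro x _ hneg
  obtain ⟨j, hpos, hdom⟩ := exists_dominatingPoint (by simpa using hη) hneg
  have hb : ∀ j, dominatingPoint η j = ![b₁, b₂, b₃] j := by
    intro j
    ext i
    fin_cases j <;> fin_cases i <;> simp [dominatingPoint, hb₁, hb₂, hb₃]
  have hle : ⟪dominatingPoint η j, x⟫ ≤ max (max ⟪b₁, x⟫ ⟪b₂, x⟫) ⟪b₃, x⟫ := by
    rw [hb]
    fin_cases j <;> simp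
  exact ⟨hpos.trans_le hle, fun p hp => (hdom p hp).trans hle⟩
end

section
/- Fix η > 3 and ε ∈ (0,1). Let P₀ ⊆ [0,1]³ be finite and nonempty, let B = {b₁, b₂, b₃} with b₁ = (1−η, 1, 1), b₂ = (1, 1−η, 1), b₃ = (1, 1, 1−η), and set P' = P₀ ∪ B. Suppose Q₀ ⊆ P₀ is nonempty and satisfies max_{q ∈ Q₀} ⟨q,x⟩ ≥ (1−ε)·max_{p ∈ P₀} ⟨p,x⟩ for every unit vector x ∈ ℝ³ with all coordinates nonnegative. Then Q' = Q₀ ∪ B satisfies max_{q ∈ Q'} ⟨q,x⟩ ≥ (1−ε)·max_{p ∈ P'} ⟨p,x⟩ for every unit vector x ∈ ℝ³. -/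
open scoped RealInnerProductSpace


/-- Arithmetic core: if `m` is below all coordinates of `x`, `m < 0`, and `p ∈ [0,1]³`,
then `⟨p,x⟩ ≤ x₀+x₁+x₂ - η m`. -/
lemma stmt14_aux (η x0 x1 x2 m p0 p1 p2 : ℝ) (hη : 3 < η)
    (h0 : m ≤ x0) (h1 : m ≤ x1) (h2 : m ≤ x2) (hm : m < 0)
    (hp0 : 0 ≤ p0) (hp0' : p0 ≤ 1) (hp1 : 0 ≤ p1) (hp1' : p1 ≤ 1)
    (hp2 : 0 ≤ p2) (hp2' : p2 ≤ 1) :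
    p0 * x0 + p1 * x1 + p2 * x2 ≤ x0 + x1 + x2 - η * m := by
  nlinarith [mul_nonneg (by linarith : (0:ℝ) ≤ 1 - p0) (by linarith : (0:ℝ) ≤ x0 - m),
    mul_nonneg (by linarith : (0:ℝ) ≤ 1 - p1) (by linarith : (0:ℝ) ≤ x1 - m),
    mul_nonneg (by linarith : (0:ℝ) ≤ 1 - p2) (by linarith : (0:ℝ) ≤ x2 - m),
    mul_nonneg hp0 (by linarith : (0:ℝ) ≤ -m),
    mul_nonneg hp1 (by linarith : (0:ℝ) ≤ -m),
    mul_nonneg hp2 (by linarith : (0:ℝ) ≤ -m)]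


/-- Claim (1) of the NP-hardness reduction: For `η > 3`,
`ε ∈ (0,1)`, finite nonempty `P₀ ⊆ [0,1]³`, and `B = {b₁,b₂,b₃}`, if `Q₀ ⊆ P₀`
is a nonempty `ε`-regret set of `P₀` for all nonnegative unit utility vectors,
then `Q' = Q₀ ∪ B` is an `ε`-regret set of `P' = P₀ ∪ B` for all unit vectors. -/
theorem stmt14 [DecidableEq (EuclideanSpace ℝ (Fin 3))]
    (η ε : ℝ) (hη : 3 < η) (hε : ε ∈ Set.Ioo (0 : ℝ) 1)
    (b₁ b₂ b₃ : EuclideanSpace ℝ (Fin 3))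
    (hb₁ : b₁ = ![1 - η, 1, 1]) (hb₂ : b₂ = ![1, 1 - η, 1])
    (hb₃ : b₃ = ![1, 1, 1 - η])
    (P₀ Q₀ : Finset (EuclideanSpace ℝ (Fin 3)))
    (hP₀ne : P₀.Nonempty) (hQ₀ne : Q₀.Nonempty) (hQ₀ : Q₀ ⊆ P₀)
    (hbox : ∀ p ∈ P₀, ∀ i, p i ∈ Set.Icc (0 : ℝ) 1)
    (hrms : ∀ x : EuclideanSpace ℝ (Fin 3), ‖x‖ = 1 → (∀ i, 0 ≤ x i) →
      (1 - ε) * P₀.sup' hP₀ne (fun p => ⟪p, x⟫) ≤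
        Q₀.sup' hQ₀ne (fun q => ⟪q, x⟫))
    (hP'ne : (P₀ ∪ {b₁, b₂, b₃}).Nonempty)
    (hQ'ne : (Q₀ ∪ {b₁, b₂, b₃}).Nonempty) :
    ∀ x : EuclideanSpace ℝ (Fin 3), ‖x‖ = 1 →
      (1 - ε) * (P₀ ∪ {b₁, b₂, b₃}).sup' hP'ne (fun p => ⟪p, x⟫) ≤
        (Q₀ ∪ {b₁, b₂, b₃}).sup' hQ'ne (fun q => ⟪q, x⟫) := by
  intro x hx
  obtain ⟨hε0, hε1⟩ := hε
  have hinner : ∀ p : EuclideanSpace ℝ (Fin 3),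
      ⟪p, x⟫ = p 0 * x 0 + p 1 * x 1 + p 2 * x 2 := fun p => by
    simp [PiLp.inner_apply, Fin.sum_univ_three, RCLike.inner_apply, mul_comm]
  obtain ⟨p, hp, hpe⟩ := Finset.exists_mem_eq_sup' hP'ne (fun p => ⟪p, x⟫)
  rw [hpe]
  have hle : ∀ q ∈ Q₀ ∪ ({b₁, b₂, b₃} : Finset (EuclideanSpace ℝ (Fin 3))),
      ⟪q, x⟫ ≤ (Q₀ ∪ {b₁, b₂, b₃}).sup' hQ'ne (fun q => ⟪q, x⟫) := fun q hq =>
    Finset.le_sup' (fun q => ⟪q, x⟫) hq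
  by_cases hpos : ∀ i, 0 ≤ x i
  · -- nonnegative utility vector: use the RMS hypothesis
    have hQsub : Q₀.sup' hQ₀ne (fun q => ⟪q, x⟫) ≤
        (Q₀ ∪ {b₁, b₂, b₃}).sup' hQ'ne (fun q => ⟪q, x⟫) :=
      Finset.sup'_le _ _ fun q hq => hle q (Finset.mem_union_left _ hq)
    have hS0 : 0 ≤ (Q₀ ∪ {b₁, b₂, b₃}).sup' hQ'ne (fun q => ⟪q, x⟫) := by
      obtain ⟨q, hq⟩ := hQ₀ne
      refine le_trans ?_ (hle q (Finset.mem_union_left _ hq))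
      rw [hinner q]
      have h0 := hbox q (hQ₀ hq) 0
      have h1 := hbox q (hQ₀ hq) 1
      have h2 := hbox q (hQ₀ hq) 2
      exact add_nonneg (add_nonneg (mul_nonneg h0.1 (hpos 0))
        (mul_nonneg h1.1 (hpos 1))) (mul_nonneg h2.1 (hpos 2))
    rcases Finset.mem_union.mp hp with hpP | hpB
    · have h1 : ⟪p, x⟫ ≤ P₀.sup' hP₀ne (fun p => ⟪p, x⟫) := Finset.le_sup' (fun p => ⟪p, x⟫) hpP
      have h2 := hrms x hx hpos
      have h3 : 0 ≤ P₀.sup' hP₀ne (fun p => ⟪p, x⟫) := by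
        obtain ⟨q, hq⟩ := hP₀ne
        refine le_trans ?_ (Finset.le_sup' _ hq)
        rw [hinner q]
        have h0 := hbox q hq 0
        have h1 := hbox q hq 1
        have h2 := hbox q hq 2
        exact add_nonneg (add_nonneg (mul_nonneg h0.1 (hpos 0))
          (mul_nonneg h1.1 (hpos 1))) (mul_nonneg h2.1 (hpos 2))
      nlinarith
    · have hpQ : ⟪p, x⟫ ≤ (Q₀ ∪ {b₁, b₂, b₃}).sup' hQ'ne (fun q => ⟪q, x⟫) :=
        hle p (Finset.mem_union_right _ hpB)
      nlinarith
  · -- some coordinate negative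
    push_neg at hpos
    obtain ⟨j, hj⟩ := hpos
    -- pick m = min coordinate and the corresponding b
    obtain ⟨b, hbB, m, hbval, hm0, hm1, hm2⟩ :
        ∃ b ∈ ({b₁, b₂, b₃} : Finset (EuclideanSpace ℝ (Fin 3))),
          ∃ m : ℝ, ⟪b, x⟫ = x 0 + x 1 + x 2 - η * m ∧ m ≤ x 0 ∧ m ≤ x 1 ∧ m ≤ x 2 := by
      rcases le_total (x 0) (x 1) with h01 | h01
      · rcases le_total (x 0) (x 2) with h02 | h02
        · exact ⟨b₁, by simp, x 0, by rw [hinner, hb₁]; simp; ring, le_refl _, h01, h02⟩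
        · exact ⟨b₃, by simp, x 2, by rw [hinner, hb₃]; simp; ring, h02, by linarith, le_refl _⟩
      · rcases le_total (x 1) (x 2) with h12 | h12
        · exact ⟨b₂, by simp, x 1, by rw [hinner, hb₂]; simp; ring, h01, le_refl _, h12⟩
        · exact ⟨b₃, by simp, x 2, by rw [hinner, hb₃]; simp; ring, by linarith, h12, le_refl _⟩
    have hmneg : m < 0 := by
      have : m ≤ x j := by fin_cases j <;> assumption
      linarith
    have hb0 : 0 ≤ ⟪b, x⟫ := by rw [hbval]; nlinarith
    have hbig : ⟪p, x⟫ ≤ ⟪b, x⟫ := by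
      rcases Finset.mem_union.mp hp with hpP | hpB
      · rw [hinner p, hbval]
        have h0 := hbox p hpP 0
        have h1 := hbox p hpP 1
        have h2 := hbox p hpP 2
        exact stmt14_aux η (x 0) (x 1) (x 2) m (p 0) (p 1) (p 2) hη hm0 hm1 hm2 hmneg
          h0.1 h0.2 h1.1 h1.2 h2.1 h2.2
      · rw [hbval]
        simp only [Finset.mem_insert, Finset.mem_singleton] at hpB
        rcases hpB with rfl | rfl | rfl
        · rw [hinner, hb₁]; simp; nlinarith
        · rw [hinner, hb₂]; simp; nlinarith
        · rw [hinner, hb₃]; simp; nlinarith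
    have hbQ : ⟪b, x⟫ ≤ (Q₀ ∪ {b₁, b₂, b₃}).sup' hQ'ne (fun q => ⟪q, x⟫) :=
      hle b (Finset.mem_union_right _ hbB)
    nlinarith
end

section
/- Fix η > 1 and ε ∈ (0,1). Let P₀ ⊆ [0,1]³ be finite, let B = {b₁, b₂, b₃} with b₁ = (1−η, 1, 1), b₂ = (1, 1−η, 1), b₃ = (1, 1, 1−η), and set P' = P₀ ∪ B. If Q' ⊆ P' is nonempty and satisfies max_{q ∈ Q'} ⟨q,x⟩ ≥ (1−ε)·max_{p ∈ P'} ⟨p,x⟩ for every unit vector x ∈ ℝ³, then B ⊆ Q'. -/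
open scoped RealInnerProductSpace

/-- Claim (2.1) of the NP-hardness reduction: For `η > 1`,
`ε ∈ (0,1)`, finite `P₀ ⊆ [0,1]³`, `B = {b₁,b₂,b₃}`, and `P' = P₀ ∪ B`,
any nonempty `ε`-regret set `Q' ⊆ P'` of `P'` (over all unit vectors)
must contain all of `B`. -/
theorem stmt15 [DecidableEq (EuclideanSpace ℝ (Fin 3))]
    (η ε : ℝ) (hη : 1 < η) (hε : ε ∈ Set.Ioo (0 : ℝ) 1)
    (b₁ b₂ b₃ : EuclideanSpace ℝ (Fin 3))
    (hb₁ : b₁ = ![1 - η, 1, 1]) (hb₂ : b₂ = ![1, 1 - η, 1])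
    (hb₃ : b₃ = ![1, 1, 1 - η])
    (P₀ : Finset (EuclideanSpace ℝ (Fin 3)))
    (hbox : ∀ p ∈ P₀, ∀ i, p i ∈ Set.Icc (0 : ℝ) 1)
    (Q' : Finset (EuclideanSpace ℝ (Fin 3)))
    (hQ'sub : Q' ⊆ P₀ ∪ {b₁, b₂, b₃}) (hQ'ne : Q'.Nonempty)
    (hP'ne : (P₀ ∪ {b₁, b₂, b₃}).Nonempty)
    (hreg : ∀ x : EuclideanSpace ℝ (Fin 3), ‖x‖ = 1 →
      (1 - ε) * (P₀ ∪ {b₁, b₂, b₃}).sup' hP'ne (fun p => ⟪p, x⟫) ≤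
        Q'.sup' hQ'ne (fun q => ⟪q, x⟫)) :
    ({b₁, b₂, b₃} : Finset (EuclideanSpace ℝ (Fin 3))) ⊆ Q' := by
  obtain ⟨hε0, hε1⟩ := hε
  set bvec : Fin 3 → EuclideanSpace ℝ (Fin 3) := ![b₁, b₂, b₃] with hbvec
  have hbmem : ∀ i : Fin 3, bvec i ∈ ({b₁, b₂, b₃} : Finset (EuclideanSpace ℝ (Fin 3))) := by
    intro i
    fin_cases i <;> simp [hbvec]
  have hbii : ∀ i : Fin 3, (bvec i) i = 1 - η := by
    intro i
    fin_cases i <;> simp [hbvec, hb₁, hb₂, hb₃]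
  -- main step: for each i, the point bvec i belongs to Q'
  have key : ∀ i : Fin 3, bvec i ∈ Q' := by
    intro i
    set x : EuclideanSpace ℝ (Fin 3) := -(EuclideanSpace.single i (1 : ℝ)) with hx
    have hxnorm : ‖x‖ = 1 := by
      simp [hx, EuclideanSpace.norm_single]
    have hinner : ∀ v : EuclideanSpace ℝ (Fin 3), ⟪v, x⟫ = -(v i) := by
      intro v
      simp [hx, inner_neg_right, EuclideanSpace.inner_single_right]
    have h1 := hreg x hxnorm
    -- sup over P' is at least η - 1
    have hPmem : bvec i ∈ P₀ ∪ ({b₁, b₂, b₃} : Finset (EuclideanSpace ℝ (Fin 3))) :=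
      Finset.mem_union_right _ (hbmem i)
    have hsupP : η - 1 ≤ (P₀ ∪ {b₁, b₂, b₃}).sup' hP'ne (fun p => ⟪p, x⟫) := by
      have := Finset.le_sup' (fun p => ⟪p, x⟫) hPmem
      rw [hinner, hbii] at this
      linarith
    have hpos : (0 : ℝ) < (1 - ε) * (η - 1) := by
      have : (0:ℝ) < 1 - ε := by linarith
      nlinarith
    have hsupQ : 0 < Q'.sup' hQ'ne (fun q => ⟪q, x⟫) := by
      have h2 : (1 - ε) * (η - 1) ≤
          (1 - ε) * (P₀ ∪ {b₁, b₂, b₃}).sup' hP'ne (fun p => ⟪p, x⟫) := by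
        apply mul_le_mul_of_nonneg_left hsupP (by linarith)
      linarith
    rw [Finset.lt_sup'_iff] at hsupQ
    obtain ⟨q, hqQ, hq⟩ := hsupQ
    rw [hinner] at hq
    have hqi : q i < 0 := by linarith
    have hqP := hQ'sub hqQ
    rcases Finset.mem_union.mp hqP with hq0 | hqB
    · exact absurd hqi (not_lt.mpr (hbox q hq0 i).1)
    · have : q = b₁ ∨ q = b₂ ∨ q = b₃ := by
        simpa using hqB
      have hqeq : q = bvec i := by
        rcases this with h | h | h <;>
        · subst h
          fin_cases i <;>
            first
            | rfl
            | (exfalso; revert hqi; simp [hbvec, hb₁, hb₂, hb₃])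
      rwa [hqeq] at hqQ
  intro b hb
  have : b = b₁ ∨ b = b₂ ∨ b = b₃ := by simpa using hb
  rcases this with h | h | h
  · subst h; simpa [hbvec] using key 0
  · subst h; simpa [hbvec] using key 1
  · subst h; simpa [hbvec] using key 2
end
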